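/- arXiv:1008.1516 — 6 statements merged into one kernel-verified Lean document; each statement's English description precedes it below -/
import Mathlib

section
/- Given a finite set V of agents, a fixed agent v, and nonnegative target rates m_u ≥ 0 for each u ≠ v, the nested event strategy — which orders the agents with strictly positive rates as m_{v_1} ≥ m_{v_2} ≥ … ≥ m_{v_ℓ} > 0 and holds event P_i = {v, v_1, …, v_i} at rate r_i = m_{v_i} − m_{v_{i+1}} (with m_{v_{ℓ+1}} := 0) — realizes the target rates: for every u ≠ v, the sum over events containing u of the event's rate equals m_u, and moreover the total rate Σ_i r_i equals max_{u≠v} m_u. -/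
/-!
Extend the sorted rates by zero, `a k := m vₖ₊₁` for `k < ℓ` and `a k := 0` otherwise, so that the
`i`-th event has rate `a i - a (i + 1)`. An agent `u = vⱼ₊₁` belongs exactly to the events with
`i ≥ j`, and their rates telescope to `a j - a ℓ = m u`; an agent outside the list has `m u = 0`
and belongs to no event. All rates together telescope to `a 0`, the largest target rate.
-/

open Finset

theorem Finset.sum_range_ite_le_sub {M : Type*} [AddCommGroup M] (a : ℕ → M) {j n : ℕ} (hjn : j ≤ n) :
    ∑ i ∈ range n, (if j ≤ i then a i - a (i + 1) else 0) = a j - a n := by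
  have hfilter : (range n).filter (j ≤ ·) = Ico j n := by
    ext i
    simp only [mem_filter, mem_range, mem_Ico]
    omega
  rw [← sum_filter, hfilter, ← neg_sub, ← sum_Ico_sub a hjn, ← sum_neg_distrib]
  simp only [neg_sub]

namespace NestedStrategy

variable {V : Type*}

def paddedRate (m : V → ℝ) (l : List V) (k : ℕ) : ℝ :=
  (l.map m).getD k 0

section paddedRate

variable {m : V → ℝ} {l : List V}

theorem paddedRate_of_lt {k : ℕ} (hk : k < l.length) : paddedRate m l k = m l[k] := by
  simp [paddedRate, List.getElem?_eq_getElem hk]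

theorem paddedRate_of_length_le {k : ℕ} (hk : l.length ≤ k) : paddedRate m l k = 0 :=
  List.getD_eq_default _ _ (by simpa using hk)

theorem paddedRate_nonneg (hm : ∀ u, 0 ≤ m u) (k : ℕ) : 0 ≤ paddedRate m l k := by
  rcases lt_or_ge k l.length with hk | hk
  · exact paddedRate_of_lt hk ▸ hm _
  · exact (paddedRate_of_length_le hk).ge

theorem le_paddedRate_zero (hsort : l.Pairwise (fun x y => m y ≤ m x)) {u : V} (hu : u ∈ l) :
    m u ≤ paddedRate m l 0 := by
  cases l with
  | nil => simp at hu
  | cons x t =>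
    rw [paddedRate_of_lt (by simp), List.getElem_cons_zero]
    rcases List.mem_cons.mp hu with rfl | hut
    · exact le_rfl
    · exact List.rel_of_pairwise_cons hsort hut

end paddedRate

theorem eq_zero_of_notMem {v u : V} {m : V → ℝ} {l : List V} (hm : ∀ u, 0 ≤ m u)
    (hmem : ∀ u : V, u ∈ l ↔ u ≠ v ∧ 0 < m u) (huv : u ≠ v) (hul : u ∉ l) : m u = 0 :=
  le_antisymm (not_lt.mp fun hpos => hul ((hmem u).mpr ⟨huv, hpos⟩)) (hm u)

variable [DecidableEq V]

def nestedStrategy (v : V) (m : V → ℝ) (l : List V) : List (Finset V × ℝ) :=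
  (List.finRange l.length).map fun i =>
    (insert v (l.take (i.1 + 1)).toFinset, paddedRate m l i.1 - paddedRate m l (i.1 + 1))

theorem map_finRange_eq_nestedStrategy (v : V) (m : V → ℝ) (l : List V) :
    (List.finRange l.length).map (fun i =>
      (insert v ((l.take (i.1 + 1)).toFinset),
       m (l.get i) - (if h : i.1 + 1 < l.length then m (l.get ⟨i.1 + 1, h⟩) else 0))) =
      nestedStrategy v m l := by
  unfold nestedStrategy
  refine List.map_congr_left (l := List.finRange l.length) fun i _ => ?_
  rw [paddedRate_of_lt i.2]
  split_ifs with h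
  · rw [paddedRate_of_lt h]; rfl
  · rw [paddedRate_of_length_le (not_lt.mp h)]; rfl

theorem sum_rates_nestedStrategy (v : V) (m : V → ℝ) (l : List V) :
    ((nestedStrategy v m l).map Prod.snd).sum = paddedRate m l 0 := by
  rw [nestedStrategy, List.map_map, ← Fin.sum_univ_def]
  simp only [Function.comp_apply]
  rw [Fin.sum_univ_eq_sum_range (fun i => paddedRate m l i - paddedRate m l (i + 1)),
    sum_range_sub', paddedRate_of_length_le le_rfl, sub_zero]

theorem sum_rates_containing_nestedStrategy {v u : V} (huv : u ≠ v) (m : V → ℝ) (l : List V)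
    (hzero : u ∉ l → m u = 0) :
    ((nestedStrategy v m l).map (fun e => if u ∈ e.1 then e.2 else 0)).sum = m u := by
  rw [nestedStrategy, List.map_map, ← Fin.sum_univ_def]
  simp only [Function.comp_apply, mem_insert, huv, List.mem_toFinset, false_or]
  rw [Fin.sum_univ_eq_sum_range
    (fun i => if u ∈ l.take (i + 1) then paddedRate m l i - paddedRate m l (i + 1) else 0)]
  by_cases hul : u ∈ l
  · have hidx : l.idxOf u < l.length := List.idxOf_lt_length_iff.mpr hul
    simp only [List.mem_take_iff_idxOf_lt hul, Nat.lt_succ_iff]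
    rw [sum_range_ite_le_sub _ hidx.le, paddedRate_of_length_le le_rfl, sub_zero,
      paddedRate_of_lt hidx, List.getElem_idxOf]
  · rw [hzero hul]
    exact sum_eq_zero fun i _ => if_neg fun h => hul (List.mem_of_mem_take h)

theorem paddedRate_zero_eq_sup' [Fintype V] {v : V} {m : V → ℝ} {l : List V}
    (hm : ∀ u, 0 ≤ m u) (hmem : ∀ u : V, u ∈ l ↔ u ≠ v ∧ 0 < m u)
    (hsort : l.Pairwise (fun x y => m y ≤ m x)) (hne : (univ.erase v).Nonempty) :
    paddedRate m l 0 = (univ.erase v).sup' hne m := by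
  refine le_antisymm ?_ (sup'_le _ _ fun u hu => ?_)
  · cases l with
    | nil =>
      obtain ⟨u, hu⟩ := id hne
      rw [paddedRate_of_length_le (le_refl 0)]
      exact (hm u).trans (le_sup' m hu)
    | cons x t =>
      rw [paddedRate_of_lt (by simp), List.getElem_cons_zero]
      exact le_sup' m (mem_erase.mpr ⟨((hmem x).mp List.mem_cons_self).1, mem_univ x⟩)
  · by_cases hul : u ∈ l
    · exact le_paddedRate_zero hsort hul
    · rw [eq_zero_of_notMem hm hmem (mem_erase.mp hu).1 hul]
      exact paddedRate_nonneg hm 0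

end NestedStrategy

open NestedStrategy in
theorem nested_strategy_realizes_general {V : Type*} [Fintype V] [DecidableEq V]
    (v : V) (m : V → ℝ) (hm : ∀ u, 0 ≤ m u)
    (l : List V)
    (hmem : ∀ u : V, u ∈ l ↔ u ≠ v ∧ 0 < m u)
    (hsort : l.Pairwise (fun x y => m y ≤ m x))
    (hne : (Finset.univ.erase v).Nonempty)
    (s : List (Finset V × ℝ))
    (hs : s = (List.finRange l.length).map (fun i =>
      (insert v ((l.take (i.1 + 1)).toFinset),
       m (l.get i) - (if h : i.1 + 1 < l.length then m (l.get ⟨i.1 + 1, h⟩) else 0)))) :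
    (∀ u : V, u ≠ v → ((s.map (fun e => if u ∈ e.1 then e.2 else 0)).sum = m u)) ∧
    (s.map Prod.snd).sum = (Finset.univ.erase v).sup' hne m := by
  rw [hs, map_finRange_eq_nestedStrategy]
  refine ⟨fun u huv =>
    sum_rates_containing_nestedStrategy huv m l (eq_zero_of_notMem hm hmem huv), ?_⟩
  rw [sum_rates_nestedStrategy, paddedRate_zero_eq_sup' hm hmem hsort hne]

/-- The nested event strategy realizes the target rates and its
total rate is the maximum target rate. Here `l` lists the agents with strictly
positive target rate in decreasing order of `m`, and the nested strategy `s`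
holds the event `{v, v₁, …, vᵢ}` at rate `m vᵢ - m vᵢ₊₁` (with `m v_{ℓ+1} := 0`). -/
theorem nested_strategy_realizes {V : Type*} [Fintype V] [DecidableEq V]
    (v : V) (m : V → ℝ) (hm : ∀ u, 0 ≤ m u)
    (l : List V) (hnd : l.Nodup) (hv : v ∉ l)
    (hmem : ∀ u : V, u ∈ l ↔ u ≠ v ∧ 0 < m u)
    (hsort : l.Pairwise (fun x y => m y ≤ m x))
    (hne : (Finset.univ.erase v).Nonempty)
    (s : List (Finset V × ℝ))
    (hs : s = (List.finRange l.length).map (fun i =>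
      (insert v ((l.take (i.1 + 1)).toFinset),
       m (l.get i) - (if h : i.1 + 1 < l.length then m (l.get ⟨i.1 + 1, h⟩) else 0)))) :
    (∀ u : V, u ≠ v → ((s.map (fun e => if u ∈ e.1 then e.2 else 0)).sum = m u)) ∧
    (s.map Prod.snd).sum = (Finset.univ.erase v).sup' hne m :=
  nested_strategy_realizes_general v m hm l hmem hsort hne s hs
end

section
/- Let V be a finite set, v ∈ V, and (m_u)_{u≠v} nonnegative target rates, not all zero. Suppose a strategy for v consists of events (P_1, r_1), …, (P_k, r_k), with v ∈ P_i and r_i > 0, that realizes the targets (i.e., for each u ≠ v, Σ_{i : u ∈ P_i} r_i = m_u). If Σ_i r_i > max_{u≠v} m_u, then its cost Σ_i r_i (c·|P_i \ {v}| + b) is strictly greater than the cost b·max_{u≠v} m_u + c·Σ_{u≠v} m_u of the nested strategy, for any b > 0 and c > 0. Consequently, any cost-minimizing realizing strategy satisfies Σ_i r_i = max_{u≠v} m_u. -/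
/-!
Every event of a strategy for `v` contributes `r · |P \ {v}|` to `Σ_{u ≠ v} m_u`, so for a
realizing strategy the cost is `c · Σ_{u ≠ v} m_u + b · (total rate)`: only the total rate can
vary, and it is at least `max m`. The bound `max m` is attained by the nested strategy, whose
events are the upper level sets `{v} ∪ {u | t ≤ m_u}` of the target values `t₁ ≥ t₂ ≥ ⋯`, taken
at rates `tᵢ - tᵢ₊₁`.
-/

open Finset

namespace RateStrategy

variable {V : Type*}

def totalRate (s : List (Finset V × ℝ)) : ℝ :=
  (s.map Prod.snd).sum

def IsValid (v : V) (s : List (Finset V × ℝ)) : Prop :=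
  ∀ e ∈ s, v ∈ e.1 ∧ 0 < e.2

lemma sum_map_filter_rate_pos {α : Type*} {s : List (α × ℝ)} (hs : ∀ e ∈ s, 0 ≤ e.2)
    (f : α × ℝ → ℝ) (hf : ∀ e, e.2 = 0 → f e = 0) :
    ((s.filter fun e => 0 < e.2).map f).sum = (s.map f).sum := by
  rw [← List.sum_map_filter_add_sum_map_filter_not (fun e => 0 < e.2) f s, left_eq_add]
  refine List.sum_eq_zero fun x hx => ?_
  obtain ⟨e, he, rfl⟩ := List.mem_map.1 hx
  obtain ⟨he, hne⟩ := List.mem_filter.1 he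
  exact hf e (le_antisymm (not_lt.1 (by simpa using hne)) (hs e he))

lemma totalRate_filter_rate_pos {s : List (Finset V × ℝ)} (hs : ∀ e ∈ s, 0 ≤ e.2) :
    totalRate (s.filter fun e => 0 < e.2) = totalRate s :=
  sum_map_filter_rate_pos hs _ fun _ he => he

variable [DecidableEq V]

def coverage (s : List (Finset V × ℝ)) (u : V) : ℝ :=
  (s.map fun e => if u ∈ e.1 then e.2 else 0).sum

def cost (v : V) (b c : ℝ) (s : List (Finset V × ℝ)) : ℝ :=
  (s.map fun e => e.2 * (c * ((e.1.erase v).card : ℝ) + b)).sum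

def Realizes (v : V) (m : V → ℝ) (s : List (Finset V × ℝ)) : Prop :=
  ∀ u, u ≠ v → coverage s u = m u

lemma coverage_le_totalRate {s : List (Finset V × ℝ)} (hs : ∀ e ∈ s, 0 ≤ e.2) (u : V) :
    coverage s u ≤ totalRate s :=
  List.sum_le_sum fun e he => by split_ifs <;> simp [hs e he]

lemma coverage_filter_rate_pos {s : List (Finset V × ℝ)} (hs : ∀ e ∈ s, 0 ≤ e.2) (u : V) :
    coverage (s.filter fun e => 0 < e.2) u = coverage s u :=
  sum_map_filter_rate_pos hs _ fun e he => by simp [he]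

section Fintype

variable [Fintype V]

lemma cost_eq (v : V) (b c : ℝ) (s : List (Finset V × ℝ)) :
    cost v b c s = c * ∑ u ∈ univ.erase v, coverage s u + b * totalRate s := by
  induction s with
  | nil => simp [cost, coverage, totalRate]
  | cons e s ih =>
    have hcard : e.2 * ((e.1.erase v).card : ℝ) =
        ∑ u ∈ univ.erase v, if u ∈ e.1 then e.2 else 0 := by
      rw [sum_ite_mem, sum_const, nsmul_eq_mul, mul_comm, erase_inter, univ_inter]
    simp only [cost, coverage, totalRate, List.map_cons, List.sum_cons] at ih ⊢
    rw [ih, sum_add_distrib, ← hcard]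
    ring

lemma Realizes.cost_eq {v : V} {m : V → ℝ} {s : List (Finset V × ℝ)} (hs : Realizes v m s)
    (b c : ℝ) : cost v b c s = c * ∑ u ∈ univ.erase v, m u + b * totalRate s := by
  rw [RateStrategy.cost_eq, sum_congr rfl fun u hu => hs u (ne_of_mem_erase hu)]

noncomputable def layers (v : V) (m : V → ℝ) : List ℝ → List (Finset V × ℝ)
  | [] => []
  | t :: ts => (insert v ({u | t ≤ m u} : Finset V), t - ts.headD 0) :: layers v m ts

variable {v : V} {m : V → ℝ}

lemma totalRate_layers (ts : List ℝ) : totalRate (layers v m ts) = ts.headD 0 := by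
  induction ts with
  | nil => rfl
  | cons t ts ih =>
    simp only [totalRate, layers, List.map_cons, List.sum_cons] at ih ⊢
    rw [ih, List.headD_cons, sub_add_cancel]

lemma coverage_layers_of_forall_le {u : V} (hu : u ≠ v) {ts : List ℝ} (h : ∀ t ∈ ts, t ≤ m u) :
    coverage (layers v m ts) u = ts.headD 0 := by
  rw [← totalRate_layers (v := v) (m := m)]
  induction ts with
  | nil => rfl
  | cons t ts ih =>
    simp only [List.forall_mem_cons] at h
    simp only [coverage, totalRate, layers, List.map_cons, List.sum_cons] at ih ⊢
    simp [hu, h.1, ih h.2]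

lemma coverage_layers_of_mem {u : V} (hu : u ≠ v) {ts : List ℝ} (hts : ts.Pairwise (· ≥ ·))
    (hmem : m u ∈ ts) : coverage (layers v m ts) u = m u := by
  induction ts with
  | nil => simp at hmem
  | cons t ts ih =>
    rw [List.pairwise_cons] at hts
    have ht : m u ≤ t := (List.mem_cons.1 hmem).elim le_of_eq (hts.1 _)
    by_cases htu : t ≤ m u
    · have hall : ∀ t' ∈ t :: ts, t' ≤ m u :=
        List.forall_mem_cons.2 ⟨htu, fun t' ht' => (hts.1 t' ht').trans htu⟩
      rw [coverage_layers_of_forall_le hu hall, List.headD_cons]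
      exact le_antisymm htu ht
    · have hmem' : m u ∈ ts :=
        (List.mem_cons.1 hmem).resolve_left fun h => htu (h ▸ le_rfl)
      simp only [coverage, layers, List.map_cons, List.sum_cons] at ih ⊢
      simp [hu, htu, ih hts.2 hmem']

lemma layers_rate_nonneg {ts : List ℝ} (hts : ts.Pairwise (· ≥ ·)) (h0 : ∀ t ∈ ts, 0 ≤ t) :
    ∀ e ∈ layers v m ts, v ∈ e.1 ∧ 0 ≤ e.2 := by
  induction ts with
  | nil => simp [layers]
  | cons t ts ih =>
    rw [List.pairwise_cons] at hts
    simp only [List.forall_mem_cons] at h0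
    have hstep : ts.headD 0 ≤ t := by
      cases ts with
      | nil => exact h0.1
      | cons t' _ => exact hts.1 t' List.mem_cons_self
    simp only [layers, List.forall_mem_cons]
    exact ⟨⟨mem_insert_self _ _, sub_nonneg.2 hstep⟩, ih hts.2 h0.2⟩

/-- The nested strategy, with its events of rate zero removed. -/
theorem exists_isValid_realizes_totalRate_le (hm : ∀ u, u ≠ v → 0 ≤ m u) {M : ℝ}
    (hM : ∀ u, u ≠ v → m u ≤ M) (hM0 : 0 ≤ M) :
    ∃ s, IsValid v s ∧ Realizes v m s ∧ totalRate s ≤ M := by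
  set ts := ((univ.erase v).image m).sort (· ≥ ·)
  have mem_ts : ∀ t, t ∈ ts ↔ ∃ u, u ≠ v ∧ m u = t := by simp [ts]
  have hts : ts.Pairwise (· ≥ ·) := pairwise_sort _ _
  have hlayers := layers_rate_nonneg (v := v) (m := m) hts fun t ht => by
    obtain ⟨u, hu, rfl⟩ := (mem_ts t).1 ht
    exact hm u hu
  have hrates : ∀ e ∈ layers v m ts, 0 ≤ e.2 := fun e he => (hlayers e he).2
  refine ⟨(layers v m ts).filter fun e => 0 < e.2, fun e he => ?_, fun u hu => ?_, ?_⟩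
  · obtain ⟨he, hpos⟩ := List.mem_filter.1 he
    exact ⟨(hlayers e he).1, by simpa using hpos⟩
  · rw [coverage_filter_rate_pos hrates,
      coverage_layers_of_mem hu hts ((mem_ts _).2 ⟨u, hu, rfl⟩)]
  · rw [totalRate_filter_rate_pos hrates, totalRate_layers]
    cases hcons : ts with
    | nil => exact hM0
    | cons t _ =>
      obtain ⟨u, hu, rfl⟩ := (mem_ts t).1 (hcons ▸ List.mem_cons_self)
      exact hM u hu

end Fintype

end RateStrategy

open RateStrategy in
theorem realizing_strategy_cost_general {V : Type*} [Fintype V] [DecidableEq V]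
    (v : V) (m : V → ℝ) (hm : ∀ u, 0 ≤ m u)
    (b c : ℝ) (hb : 0 < b)
    (M : ℝ) (hM : IsGreatest (m '' {u | u ≠ v}) M)
    (s : List (Finset V × ℝ)) (hval : ∀ e ∈ s, v ∈ e.1 ∧ 0 < e.2)
    (hreal : ∀ u : V, u ≠ v → ((s.map (fun e => if u ∈ e.1 then e.2 else 0)).sum = m u)) :
    (M < (s.map Prod.snd).sum →
      b * M + c * ∑ u ∈ Finset.univ.erase v, m u <
        (s.map (fun e => e.2 * (c * ((e.1.erase v).card : ℝ) + b))).sum) ∧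
    ((∀ s' : List (Finset V × ℝ), (∀ e ∈ s', v ∈ e.1 ∧ 0 < e.2) →
        (∀ u : V, u ≠ v → ((s'.map (fun e => if u ∈ e.1 then e.2 else 0)).sum = m u)) →
        (s.map (fun e => e.2 * (c * ((e.1.erase v).card : ℝ) + b))).sum ≤
          (s'.map (fun e => e.2 * (c * ((e.1.erase v).card : ℝ) + b))).sum) →
      (s.map Prod.snd).sum = M) := by
  show (M < totalRate s → b * M + c * ∑ u ∈ univ.erase v, m u < cost v b c s) ∧
    ((∀ s', IsValid v s' → Realizes v m s' → cost v b c s ≤ cost v b c s') → totalRate s = M)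
  obtain ⟨⟨u₀, hu₀, rfl⟩, hmax⟩ := hM
  have hreal : Realizes v m s := hreal
  have hM_le : m u₀ ≤ totalRate s :=
    hreal u₀ hu₀ ▸ coverage_le_totalRate (fun e he => (hval e he).2.le) u₀
  refine ⟨fun hlt => ?_, fun hmin => ?_⟩
  · rw [hreal.cost_eq, add_comm, add_lt_add_iff_left]
    exact mul_lt_mul_of_pos_left hlt hb
  · obtain ⟨s', hval', hreal', hs'⟩ := exists_isValid_realizes_totalRate_le (fun u _ => hm u)
      (fun u hu => hmax ⟨u, hu, rfl⟩) (hm u₀)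
    have hcost := hmin s' hval' hreal'
    rw [hreal.cost_eq, hreal'.cost_eq, add_le_add_iff_left, mul_le_mul_iff_of_pos_left hb] at hcost
    exact le_antisymm (hcost.trans hs') hM_le

/-- Any valid strategy realizing the target rates whose total rate
strictly exceeds the maximum target rate `M` has cost strictly greater than the
cost `b·M + c·Σ_{u≠v} m u` of the nested strategy; consequently any cost-minimizing
realizing strategy has total rate exactly `M`. -/
theorem realizing_strategy_cost {V : Type*} [Fintype V] [DecidableEq V]
    (v : V) (m : V → ℝ) (hm : ∀ u, 0 ≤ m u)
    (hex : ∃ u, u ≠ v ∧ 0 < m u)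
    (b c : ℝ) (hb : 0 < b) (hc : 0 < c)
    (M : ℝ) (hM : IsGreatest (m '' {u | u ≠ v}) M)
    (s : List (Finset V × ℝ)) (hval : ∀ e ∈ s, v ∈ e.1 ∧ 0 < e.2)
    (hreal : ∀ u : V, u ≠ v → ((s.map (fun e => if u ∈ e.1 then e.2 else 0)).sum = m u)) :
    (M < (s.map Prod.snd).sum →
      b * M + c * ∑ u ∈ Finset.univ.erase v, m u <
        (s.map (fun e => e.2 * (c * ((e.1.erase v).card : ℝ) + b))).sum) ∧
    ((∀ s' : List (Finset V × ℝ), (∀ e ∈ s', v ∈ e.1 ∧ 0 < e.2) →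
        (∀ u : V, u ≠ v → ((s'.map (fun e => if u ∈ e.1 then e.2 else 0)).sum = m u)) →
        (s.map (fun e => e.2 * (c * ((e.1.erase v).card : ℝ) + b))).sum ≤
          (s'.map (fun e => e.2 * (c * ((e.1.erase v).card : ℝ) + b))).sum) →
      (s.map Prod.snd).sum = M) :=
  realizing_strategy_cost_general v m hm b c hb M hM s hval hreal
end

section
/- Let G be a finite simple graph in which every vertex is incident to at most one 'bridge-like' edge, meaning: for every vertex v, there is at most one neighbor u of v such that u and v have no common neighbor. Then for every vertex v of degree d_v ≥ 2, the number of triangles containing v is at least (d_v − 1)/2. -/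
/-- Number of triangles containing `v`: pairs of distinct neighbours of `v`
that are adjacent to each other. -/
def triCount {V : Type*} [Fintype V] [DecidableEq V]
    (G : SimpleGraph V) [DecidableRel G.Adj] (v : V) : ℕ :=
  (((G.neighborFinset v).powersetCard 2).filter
    (fun p => ∀ x ∈ p, ∀ y ∈ p, x ≠ y → G.Adj x y)).card

/-!
All but at most one neighbour `u` of `v` share a neighbour `w` with `v`, and then `{u, w}` is
a triangle through `v`. Each triangle through `v` arises in this way from at most two
neighbours, so `d_v - 1 ≤ 2 · triCount G v`.
-/

open Finset

namespace SimpleGraph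

variable {V : Type*} [Fintype V] {G : SimpleGraph V} [DecidableRel G.Adj]

theorem card_neighborFinset_le_card_filter_exists_common_add_one {v : V}
    (h : ∀ u u' : V, G.Adj v u → G.Adj v u' →
      (∀ w, ¬(G.Adj v w ∧ G.Adj u w)) → (∀ w, ¬(G.Adj v w ∧ G.Adj u' w)) → u = u') :
    #(G.neighborFinset v) ≤
      #((G.neighborFinset v).filter (fun u => ∃ w, G.Adj v w ∧ G.Adj u w)) + 1 := by
  have hlonely :
      #((G.neighborFinset v).filter (fun u => ¬∃ w, G.Adj v w ∧ G.Adj u w)) ≤ 1 := by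
    refine card_le_one.mpr fun a ha b hb => ?_
    simp only [mem_filter, mem_neighborFinset, not_exists] at ha hb
    exact h a b ha.1 hb.1 ha.2 hb.2
  rw [← card_filter_add_card_filter_not (fun u => ∃ w, G.Adj v w ∧ G.Adj u w)]
  omega

variable [DecidableEq V] (G)

/-- The triangles through `v`, each recorded as the pair of its other two vertices. -/
def neighborTriangles (v : V) : Finset (Finset V) :=
  ((G.neighborFinset v).powersetCard 2).filter (fun p => ∀ x ∈ p, ∀ y ∈ p, x ≠ y → G.Adj x y)

theorem triCount_eq_card_neighborTriangles (v : V) :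
    triCount G v = #(G.neighborTriangles v) := rfl

variable {G}

theorem pair_mem_neighborTriangles {v u w : V} (hu : G.Adj v u) (hw : G.Adj v w)
    (huw : G.Adj u w) : {u, w} ∈ G.neighborTriangles v := by
  refine mem_filter.mpr ⟨mem_powersetCard.mpr ⟨?_, card_pair huw.ne⟩, ?_⟩
  · simp [insert_subset_iff, hu, hw]
  · simp only [mem_insert, mem_singleton]
    rintro x (rfl | rfl) y (rfl | rfl) hxy
    exacts [absurd rfl hxy, huw, huw.symm, absurd rfl hxy]

variable (G)

theorem card_filter_exists_common_le_two_mul_triCount (v : V) :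
    #((G.neighborFinset v).filter (fun u => ∃ w, G.Adj v w ∧ G.Adj u w)) ≤ 2 * triCount G v := by
  have hcover : (G.neighborFinset v).filter (fun u => ∃ w, G.Adj v w ∧ G.Adj u w) ⊆
      (G.neighborTriangles v).biUnion id := by
    intro u hu
    obtain ⟨hvu, w, hvw, huw⟩ := mem_filter.mp hu
    exact mem_biUnion.mpr ⟨{u, w},
      pair_mem_neighborTriangles ((mem_neighborFinset G v u).mp hvu) hvw huw, mem_insert_self u _⟩
  calc _ ≤ #((G.neighborTriangles v).biUnion id) := card_le_card hcover
    _ ≤ ∑ p ∈ G.neighborTriangles v, #p := card_biUnion_le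
    _ = 2 * triCount G v := by
      rw [triCount_eq_card_neighborTriangles, mul_comm, ← smul_eq_mul, ← sum_const]
      exact sum_congr rfl fun p hp => (mem_powersetCard.mp (mem_filter.mp hp).1).2

end SimpleGraph

theorem triangles_lower_bound_general {V : Type*} [Fintype V] [DecidableEq V]
    (G : SimpleGraph V) [DecidableRel G.Adj]
    (h : ∀ v u u' : V, G.Adj v u → G.Adj v u' →
      (∀ w, ¬(G.Adj v w ∧ G.Adj u w)) → (∀ w, ¬(G.Adj v w ∧ G.Adj u' w)) → u = u')
    (v : V) :
    ((G.degree v : ℝ) - 1) / 2 ≤ (triCount G v : ℝ) := by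
  have hdeg : G.degree v ≤ 2 * triCount G v + 1 := by
    rw [← G.card_neighborFinset_eq_degree]
    exact (SimpleGraph.card_neighborFinset_le_card_filter_exists_common_add_one (h v)).trans
      (Nat.add_le_add_right (G.card_filter_exists_common_le_two_mul_triCount v) 1)
  have : (G.degree v : ℝ) ≤ 2 * triCount G v + 1 := by exact_mod_cast hdeg
  linarith

/-- If in a finite simple graph every vertex has at most one neighbour
with which it shares no common neighbour, then every vertex of degree `d ≥ 2` is
contained in at least `(d - 1)/2` triangles. -/
theorem triangles_lower_bound {V : Type*} [Fintype V] [DecidableEq V]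
    (G : SimpleGraph V) [DecidableRel G.Adj]
    (h : ∀ v u u' : V, G.Adj v u → G.Adj v u' →
      (∀ w, ¬(G.Adj v w ∧ G.Adj u w)) → (∀ w, ¬(G.Adj v w ∧ G.Adj u' w)) → u = u')
    (v : V) (hd : 2 ≤ G.degree v) :
    ((G.degree v : ℝ) - 1) / 2 ≤ (triCount G v : ℝ) :=
  triangles_lower_bound_general G h v
end

section
/- Let G be a finite simple graph and W = {v : d_v ≥ 2} nonempty. Suppose every vertex has at most one neighbor with which it shares no common neighbor. Then the clustering coefficient E(G) = (1/|W|) Σ_{v∈W} N_{v,△} / C(d_v, 2) satisfies E(G) ≥ 1/d̄_{G,W}, where d̄_{G,W} is the average degree over W and N_{v,△} is the number of triangles containing v. -/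
/-!
Every neighbour of `v` sharing a neighbour `w` with `v` lies in the triangle `{u, w}` at `v`,
and a triangle covers two neighbours; with at most one neighbour left over this gives
`d_v ≤ 2 N_{v,△} + 1`, i.e. `N_{v,△} / C(d_v, 2) ≥ 1 / d_v` once `d_v ≥ 2`. Jensen's inequality
for `x ↦ x⁻¹` then compares the average of `1 / d_v` with the reciprocal of the average degree.
-/

open Finset

theorem inv_avg_le_avg_inv {ι : Type*} {s : Finset ι} (hs : s.Nonempty) {x : ι → ℝ}
    (hx : ∀ i ∈ s, 0 < x i) :
    ((∑ i ∈ s, x i) / #s)⁻¹ ≤ (∑ i ∈ s, (x i)⁻¹) / #s := by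
  have hcard : (0 : ℝ) < #s := by exact_mod_cast hs.card_pos
  have hw : ∑ _i ∈ s, (#s : ℝ)⁻¹ = 1 := by simp [hcard.ne']
  rw [div_eq_inv_mul, div_eq_inv_mul, mul_sum, mul_sum]
  simpa using (convexOn_zpow (-1)).map_sum_le (fun _ _ => (inv_pos.2 hcard).le) hw hx

theorem inv_le_div_choose_two {d t : ℕ} (hd : 2 ≤ d) (hdt : d ≤ 2 * t + 1) :
    (d : ℝ)⁻¹ ≤ t / d.choose 2 := by
  have hd' : (2 : ℝ) ≤ d := by exact_mod_cast hd
  have hdt' : (d : ℝ) ≤ 2 * t + 1 := by exact_mod_cast hdt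
  rw [Nat.cast_choose_two, inv_eq_one_div, div_le_div_iff₀ (by linarith) (by nlinarith)]
  nlinarith

section

variable {V : Type*} [Fintype V] [DecidableEq V] (G : SimpleGraph V) [DecidableRel G.Adj]

theorem card_filter_exists_common_le_two_mul_triCount (v : V) :
    #{u ∈ G.neighborFinset v | ∃ w, G.Adj v w ∧ G.Adj u w} ≤ 2 * triCount G v := by
  set T := ((G.neighborFinset v).powersetCard 2).filter
    (fun p => ∀ x ∈ p, ∀ y ∈ p, x ≠ y → G.Adj x y)
  calc #{u ∈ G.neighborFinset v | ∃ w, G.Adj v w ∧ G.Adj u w}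
      ≤ #(T.biUnion id) := by
        refine card_le_card fun u hu => ?_
        obtain ⟨hvu, w, hvw, huw⟩ : G.Adj v u ∧ ∃ w, G.Adj v w ∧ G.Adj u w := by simpa using hu
        refine mem_biUnion.2 ⟨{u, w}, ?_, mem_insert_self _ _⟩
        simp [T, mem_powersetCard, insert_subset_iff, card_pair (G.ne_of_adj huw), hvu, hvw,
          huw, huw.symm]
    _ ≤ ∑ p ∈ T, #p := card_biUnion_le
    _ = 2 * triCount G v := by
        rw [sum_const_nat fun p hp => (mem_powersetCard.1 (mem_filter.1 hp).1).2, mul_comm]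
        rfl

theorem degree_le_two_mul_triCount_add_one {v : V}
    (hv : ∀ u u', G.Adj v u → G.Adj v u' →
      (∀ w, ¬(G.Adj v w ∧ G.Adj u w)) → (∀ w, ¬(G.Adj v w ∧ G.Adj u' w)) → u = u') :
    G.degree v ≤ 2 * triCount G v + 1 := by
  have hlonely : #{u ∈ G.neighborFinset v | ¬∃ w, G.Adj v w ∧ G.Adj u w} ≤ 1 :=
    card_le_one.2 fun a ha b hb => by
      simp only [mem_filter, SimpleGraph.mem_neighborFinset, not_exists] at ha hb
      exact hv a b ha.1 hb.1 ha.2 hb.2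
  rw [← G.card_neighborFinset_eq_degree,
    ← card_filter_add_card_filter_not fun u => ∃ w, G.Adj v w ∧ G.Adj u w]
  linarith [card_filter_exists_common_le_two_mul_triCount G v]

end

/-- If every vertex has at most one neighbour with which it shares no
common neighbour, then the clustering coefficient (averaged over the set `W` of vertices
of degree at least 2) is at least the reciprocal of the average degree over `W`. -/
theorem clustering_ge_inv_avg_degree {V : Type*} [Fintype V] [DecidableEq V]
    (G : SimpleGraph V) [DecidableRel G.Adj]
    (h : ∀ v u u' : V, G.Adj v u → G.Adj v u' →
      (∀ w, ¬(G.Adj v w ∧ G.Adj u w)) → (∀ w, ¬(G.Adj v w ∧ G.Adj u' w)) → u = u')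
    (W : Finset V) (hW : W = univ.filter (fun v => 2 ≤ G.degree v)) (hWne : W.Nonempty) :
    1 / ((∑ v ∈ W, (G.degree v : ℝ)) / (W.card : ℝ)) ≤
      (∑ v ∈ W, (triCount G v : ℝ) / ((G.degree v).choose 2 : ℝ)) / (W.card : ℝ) := by
  have hdeg : ∀ v ∈ W, 2 ≤ G.degree v := fun v hv => by simpa [hW] using hv
  rw [one_div]
  calc ((∑ v ∈ W, (G.degree v : ℝ)) / #W)⁻¹
      ≤ (∑ v ∈ W, (G.degree v : ℝ)⁻¹) / #W :=
        inv_avg_le_avg_inv hWne fun v hv => by exact_mod_cast (hdeg v hv).trans_lt' two_pos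
    _ ≤ (∑ v ∈ W, (triCount G v : ℝ) / (G.degree v).choose 2) / #W := by
        gcongr with v hv
        exact inv_le_div_choose_two (hdeg v hv) (degree_le_two_mul_triCount_add_one G (h v))
end

section
/- In any stable event configuration of the social-event game with parameters a, b, c > 0 and γ = a/c, every invitation rate satisfies M^v_{v,u} < γ for all agents u ≠ v, and M^v_{v,u} > 0 implies u ∈ N_v (i.e., agents only invite those with whom they end up connected). -/
open Finset

/-- An event configuration: each agent holds a finite list of events,
each event being a set of attendees together with a rate. -/
abbrev Config (V : Type*) := V → List (Finset V × ℝ)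

section Game

variable {V : Type*} [Fintype V] [DecidableEq V]

/-- A valid strategy for `v`: every event contains `v` and has positive rate. -/
def ValidStrategy (v : V) (s : List (Finset V × ℝ)) : Prop :=
  ∀ e ∈ s, v ∈ e.1 ∧ 0 < e.2

def ConfigValid (cfg : Config V) : Prop := ∀ v, ValidStrategy v (cfg v)

/-- The meeting rate between `u` and `v` supported by `w` (rate of events held by `w`
attended by both `u` and `v`). -/
def rateBy (cfg : Config V) (w u v : V) : ℝ :=
  ((cfg w).map (fun e => if u ∈ e.1 ∧ v ∈ e.1 then e.2 else 0)).sum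

/-- The total meeting rate between `u` and `v`. -/
def meet (cfg : Config V) (u v : V) : ℝ := ∑ w, rateBy cfg w u v

/-- `u` and `v` are connected when their meeting rate is at least the threshold `1`. -/
def connected (cfg : Config V) (u v : V) : Prop := u ≠ v ∧ 1 ≤ meet cfg u v

open scoped Classical in
/-- The set of agents connected to `v`. -/
noncomputable def nbrs (cfg : Config V) (v : V) : Finset V :=
  univ.filter (fun u => connected cfg u v)

/-- The cost of strategy `s` for agent `v` with parameters `b, c`. -/
def stratCost (b c : ℝ) (v : V) (s : List (Finset V × ℝ)) : ℝ :=
  (s.map (fun e => e.2 * (c * ((e.1.erase v).card : ℝ) + b))).sum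

/-- Utility of agent `v`: benefit `a` per connection minus cost of own events. -/
noncomputable def utility (a b c : ℝ) (cfg : Config V) (v : V) : ℝ :=
  a * ((nbrs cfg v).card : ℝ) - stratCost b c v (cfg v)

/-- A configuration is stable when it is valid and is a Nash equilibrium:
no agent can strictly improve her utility by a unilateral change of strategy. -/
def Stable (a b c : ℝ) (cfg : Config V) : Prop :=
  ConfigValid cfg ∧ ∀ v (s : List (Finset V × ℝ)), ValidStrategy v s →
    utility a b c (Function.update cfg v s) v ≤ utility a b c cfg v

/-- A configuration supports the graph `G` when adjacency coincides with connection. -/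
def Supports (cfg : Config V) (G : SimpleGraph V) : Prop :=
  ∀ u v, G.Adj u v ↔ connected cfg u v

end Game

/-!
A host `v` who pays for a guest `u` at rate `M ≥ γ = a / c` can drop every guest seated at the
full rate `M` in the events that contain `u` (`u` among them): each such guest saves `c M ≥ a`
and costs at most one connection. The remaining guests of those events all have seats below `M`,
and nested events realise the same seats with total rate equal to the largest of them, below `M`,
so a positive amount of the fixed cost `b` is saved as well: the deviation is strictly
profitable. Inviting a non-neighbour `u` at positive rate is wasteful for a simpler reason:
removing `u` from all events saves `c` times that rate and loses no connection.
-/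

section Strategy

variable {V : Type*}

def totalRate (s : List (Finset V × ℝ)) : ℝ := (s.map Prod.snd).sum

@[simp] lemma totalRate_nil : totalRate ([] : List (Finset V × ℝ)) = 0 := rfl

@[simp] lemma totalRate_cons (e : Finset V × ℝ) (s : List (Finset V × ℝ)) :
    totalRate (e :: s) = e.2 + totalRate s := by
  simp [totalRate]

@[simp] lemma totalRate_append (s t : List (Finset V × ℝ)) :
    totalRate (s ++ t) = totalRate s + totalRate t := by
  simp [totalRate]

@[simp] lemma totalRate_map_fst (s : List (Finset V × ℝ)) (g : Finset V × ℝ → Finset V) :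
    totalRate (s.map fun e => (g e, e.2)) = totalRate s := by
  simp [totalRate, Function.comp_def]

variable [DecidableEq V]

def pairRate (s : List (Finset V × ℝ)) (u v : V) : ℝ :=
  (s.map fun e => if u ∈ e.1 ∧ v ∈ e.1 then e.2 else 0).sum

lemma rateBy_eq_pairRate (cfg : Config V) (w u v : V) :
    rateBy cfg w u v = pairRate (cfg w) u v := rfl

variable (s t : List (Finset V × ℝ)) (u v : V)

@[simp] lemma pairRate_nil : pairRate ([] : List (Finset V × ℝ)) u v = 0 := rfl

@[simp] lemma pairRate_cons (e : Finset V × ℝ) :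
    pairRate (e :: s) u v = (if u ∈ e.1 ∧ v ∈ e.1 then e.2 else 0) + pairRate s u v := by
  simp [pairRate]

@[simp] lemma pairRate_append : pairRate (s ++ t) u v = pairRate s u v + pairRate t u v := by
  simp [pairRate]

lemma pairRate_comm : pairRate s u v = pairRate s v u := by
  simp only [pairRate, and_comm]

lemma pairRate_filter_add_filter_not (p : Finset V × ℝ → Prop) [DecidablePred p] :
    pairRate (s.filter p) u v + pairRate (s.filter fun e => ¬p e) u v = pairRate s u v :=
  List.sum_map_filter_add_sum_map_filter_not p _ s

lemma pairRate_map_fst_of_iff (g : Finset V × ℝ → Finset V)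
    (h : ∀ e ∈ s, (u ∈ g e ∧ v ∈ g e ↔ u ∈ e.1 ∧ v ∈ e.1)) :
    pairRate (s.map fun e => (g e, e.2)) u v = pairRate s u v := by
  simp only [pairRate, List.map_map]
  exact congrArg List.sum (List.map_congr_left fun e he => if_congr (h e he) rfl rfl)

lemma pairRate_eq_totalRate (h : ∀ e ∈ s, u ∈ e.1 ∧ v ∈ e.1) :
    pairRate s u v = totalRate s := by
  simp only [pairRate, totalRate]
  exact congrArg List.sum (List.map_congr_left fun e he => if_pos (h e he))

variable {s u v}

lemma pairRate_eq_zero (h : ∀ e ∈ s, ¬(u ∈ e.1 ∧ v ∈ e.1)) : pairRate s u v = 0 :=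
  List.sum_eq_zero fun _ hx => by
    obtain ⟨e, he, rfl⟩ := List.mem_map.mp hx
    exact if_neg (h e he)

lemma pairRate_nonneg {w : V} (hs : ValidStrategy w s) : 0 ≤ pairRate s u v :=
  List.sum_nonneg fun _ hx => by
    obtain ⟨e, he, rfl⟩ := List.mem_map.mp hx
    split_ifs
    exacts [(hs e he).2.le, le_rfl]

lemma pairRate_le_totalRate {w : V} (hs : ValidStrategy w s) : pairRate s u v ≤ totalRate s :=
  List.sum_le_sum fun e he => by
    split_ifs
    exacts [le_rfl, (hs e he).2.le]

@[simp] lemma stratCost_append (b c : ℝ) :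
    stratCost b c v (s ++ t) = stratCost b c v s + stratCost b c v t := by
  simp [stratCost]

lemma stratCost_filter_add_filter_not (b c : ℝ) (p : Finset V × ℝ → Prop) [DecidablePred p] :
    stratCost b c v (s.filter p) + stratCost b c v (s.filter fun e => ¬p e) = stratCost b c v s :=
  List.sum_map_filter_add_sum_map_filter_not p _ s

lemma stratCost_eq [Fintype V] (b c : ℝ) (hv : ∀ e ∈ s, v ∈ e.1) :
    stratCost b c v s = c * ∑ y ∈ univ.erase v, pairRate s y v + b * totalRate s := by
  induction s with
  | nil => simp [stratCost]
  | cons e s ih =>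
    have hve : v ∈ e.1 := hv e List.mem_cons_self
    have hguests : ∑ y ∈ univ.erase v, (if y ∈ e.1 ∧ v ∈ e.1 then e.2 else 0)
        = e.2 * #(e.1.erase v) := by
      simp only [hve, and_true]
      rw [sum_ite_mem, sum_const, nsmul_eq_mul, mul_comm]
      congr 3
      ext; simp
    simp only [stratCost, List.map_cons, List.sum_cons] at ih ⊢
    rw [ih fun e' he' => hv e' (List.mem_cons_of_mem e he')]
    simp only [pairRate_cons, sum_add_distrib, hguests, totalRate_cons]
    ring

/-- Add the guests by increasing `m`: the new guest `a` joins every event built so far and tops up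
her seat with a private event `{v, a}`, so the total rate stays `max m`. -/
lemma exists_validStrategy_pairRate_eq (v : V) (m : V → ℝ) (C : Finset V) (hvC : v ∉ C)
    (hm : ∀ y ∈ C, 0 < m y) {R : ℝ} (hR : 0 ≤ R) (hmR : ∀ y ∈ C, m y ≤ R) :
    ∃ s, ValidStrategy v s ∧ (∀ y ≠ v, pairRate s y v = if y ∈ C then m y else 0) ∧
      totalRate s ≤ R := by
  induction C using Finset.induction_on_max_value (f := m) generalizing R with
  | empty => exact ⟨[], by simp [ValidStrategy], by simp, by simpa using hR⟩
  | insert a C haC hmax ih =>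
    have hav : a ≠ v := fun h => hvC (h ▸ mem_insert_self a C)
    obtain ⟨s, hs, hseat, hrate⟩ := ih (fun h => hvC (mem_insert_of_mem h))
      (fun y hy => hm y (mem_insert_of_mem hy)) (hm a (mem_insert_self a C)).le hmax
    set s₁ := s.map fun e => (insert a e.1, e.2)
    have hs₁ : ValidStrategy v s₁ := by
      simp only [s₁, ValidStrategy, List.mem_map]
      rintro _ ⟨e, he, rfl⟩
      exact ⟨mem_insert_of_mem (hs e he).1, (hs e he).2⟩
    have hseat₁ :
        ∀ y ≠ v, pairRate s₁ y v = if y = a then totalRate s else pairRate s y v := by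
      intro y hyv
      split_ifs with hya
      · subst hya
        rw [pairRate_eq_totalRate s₁ y v fun e he => ?_, totalRate_map_fst]
        obtain ⟨e', he', rfl⟩ := List.mem_map.mp he
        exact ⟨mem_insert_self y _, mem_insert_of_mem (hs e' he').1⟩
      · exact pairRate_map_fst_of_iff _ _ _ _ fun e _ => by simp [hya, hav.symm]
    have hma : m a ≤ R := hmR a (mem_insert_self a C)
    rcases hrate.lt_or_eq with hlt | heq
    · refine ⟨s₁ ++ [({v, a}, m a - totalRate s)], fun e he => ?_, fun y hyv => ?_, ?_⟩
      · rcases List.mem_append.mp he with h | h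
        · exact hs₁ e h
        · obtain rfl := List.mem_singleton.mp h
          exact ⟨mem_insert_self v _, sub_pos.mpr hlt⟩
      · rw [pairRate_append, hseat₁ y hyv]
        by_cases hya : y = a
        · subst hya
          simp [hyv]
        · simp [hya, hyv, hseat y hyv]
      · simpa [s₁] using hma
    · refine ⟨s₁, hs₁, fun y hyv => ?_, by simpa [s₁, heq] using hma⟩
      rw [hseat₁ y hyv]
      by_cases hya : y = a
      · subst hya
        simp [heq]
      · simp [hya, hseat y hyv]

end Strategy

section Deviation

variable {V : Type*} [Fintype V] [DecidableEq V]

lemma meet_update (cfg : Config V) (v y : V) (s : List (Finset V × ℝ)) :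
    meet (Function.update cfg v s) y v = meet cfg y v - pairRate (cfg v) y v + pairRate s y v := by
  simp only [meet, rateBy, ← add_sum_erase _ _ (mem_univ v), Function.update_self]
  rw [sum_congr rfl fun w hw => by rw [Function.update_of_ne (ne_of_mem_erase hw)]]
  simp only [pairRate]
  ring

lemma nbrs_sdiff_subset_nbrs_update (cfg : Config V) (v : V) (s : List (Finset V × ℝ))
    (D : Finset V) (h : ∀ y ∈ nbrs cfg v \ D, pairRate (cfg v) y v ≤ pairRate s y v) :
    nbrs cfg v \ D ⊆ nbrs (Function.update cfg v s) v := by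
  intro y hy
  have hcon : connected cfg y v := by simpa [nbrs] using (mem_sdiff.mp hy).1
  simp only [nbrs, mem_filter, mem_univ, true_and, connected, meet_update]
  exact ⟨hcon.1, by linarith [hcon.2, h y hy]⟩

variable {a b c : ℝ} {cfg : Config V}

lemma ValidStrategy.exists_drop_full_guests (hb : 0 < b) (hc : 0 ≤ c) {v : V}
    {d : List (Finset V × ℝ)} (hd : ValidStrategy v d) (hM : 0 < totalRate d) :
    ∃ s, ValidStrategy v s ∧
      (∀ y ≠ v, pairRate d y v < totalRate d → pairRate d y v ≤ pairRate s y v) ∧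
      c * totalRate d * #((univ.erase v).filter fun y => pairRate d y v = totalRate d) <
        stratCost b c v d - stratCost b c v s := by
  set M := totalRate d
  set m : V → ℝ := fun y => pairRate d y v
  have hm0 : ∀ y, 0 ≤ m y := fun y => pairRate_nonneg hd
  set C := (univ.erase v).filter fun y => 0 < m y ∧ m y < M
  set D := (univ.erase v).filter fun y => m y = M
  obtain ⟨R, hR0, hRM, hCR⟩ : ∃ R, 0 ≤ R ∧ R < M ∧ ∀ y ∈ C, m y ≤ R := by
    refine ⟨(insert 0 (C.image m)).max' (insert_nonempty _ _), le_max' _ _ (mem_insert_self _ _),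
      (max'_lt_iff _ _).mpr ?_,
      fun y hy => le_max' _ _ (mem_insert_of_mem (mem_image_of_mem m hy))⟩
    simp only [mem_insert, mem_image]
    rintro _ (rfl | ⟨y, hy, rfl⟩)
    exacts [hM, (mem_filter.mp hy).2.2]
  obtain ⟨s, hs, hseat, hsR⟩ := exists_validStrategy_pairRate_eq v m C (by simp [C])
    (fun y hy => (mem_filter.mp hy).2.1) hR0 hCR
  refine ⟨s, hs, fun y hyv hy => ?_, ?_⟩
  · rw [hseat y hyv]
    split_ifs with hyC
    · exact le_rfl
    · simp only [C, mem_filter, mem_erase, mem_univ, and_true, not_and, not_lt] at hyC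
      exact not_lt.mp fun h => (hyC hyv h).not_gt hy
  have hloss : M * #D ≤ ∑ y ∈ univ.erase v, (m y - pairRate s y v) := by
    calc M * #D = ∑ y ∈ D, (m y - pairRate s y v) := by
          rw [mul_comm, ← nsmul_eq_mul, ← sum_const]
          refine sum_congr rfl fun y hy => ?_
          obtain ⟨hyv, hyM⟩ : y ≠ v ∧ m y = M := by simpa [D] using hy
          simp [hseat y hyv, C, hyM]
      _ ≤ _ := sum_le_sum_of_subset_of_nonneg (filter_subset _ _) fun y hy _ => by
          rw [hseat y (ne_of_mem_erase hy)]
          split_ifs <;> simp [hm0 y]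
  rw [stratCost_eq b c fun e he => (hd e he).1, stratCost_eq b c fun e he => (hs e he).1]
  rw [sum_sub_distrib] at hloss
  nlinarith [mul_le_mul_of_nonneg_left hloss hc, mul_pos hb (sub_pos.mpr hRM)]

lemma Stable.stratCost_sub_le (hst : Stable a b c cfg) (ha : 0 ≤ a) {v : V}
    {s : List (Finset V × ℝ)} (hs : ValidStrategy v s) {D : Finset V}
    (hN : nbrs cfg v \ D ⊆ nbrs (Function.update cfg v s) v) :
    stratCost b c v (cfg v) - stratCost b c v s ≤ a * #D := by
  have hle := hst.2 v s hs
  simp only [utility, Function.update_self] at hle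
  have hcard : (#(nbrs cfg v) : ℝ) ≤ #(nbrs (Function.update cfg v s) v) + #D := by
    exact_mod_cast card_le_card_sdiff_add_card.trans (Nat.add_le_add_right (card_le_card hN) _)
  nlinarith

lemma Stable.mem_nbrs_of_rateBy_pos (hst : Stable a b c cfg) (ha : 0 ≤ a) (hc : 0 < c)
    {v u : V} (huv : u ≠ v) (hpos : 0 < rateBy cfg v v u) : u ∈ nbrs cfg v := by
  by_contra hu
  have hval := hst.1 v
  set s := (cfg v).map fun e => (e.1.erase u, e.2)
  have hs : ValidStrategy v s := by
    simp only [s, ValidStrategy, List.mem_map]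
    rintro _ ⟨e, he, rfl⟩
    exact ⟨mem_erase.mpr ⟨huv.symm, (hval e he).1⟩, (hval e he).2⟩
  have hseat : ∀ y ≠ u, pairRate s y v = pairRate (cfg v) y v := fun y hy =>
    pairRate_map_fst_of_iff _ _ _ _ fun e _ => by simp [hy, huv.symm]
  have hseat_u : pairRate s u v = 0 := pairRate_eq_zero fun e he => by
    obtain ⟨e', -, rfl⟩ := List.mem_map.mp he
    simp
  have hN : nbrs cfg v \ ∅ ⊆ nbrs (Function.update cfg v s) v :=
    nbrs_sdiff_subset_nbrs_update _ _ _ _ fun y hy => by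
      rw [hseat y fun hyu => hu (hyu ▸ (mem_sdiff.mp hy).1)]
  have hsaving : stratCost b c v (cfg v) - stratCost b c v s = c * rateBy cfg v v u := by
    rw [stratCost_eq b c fun e he => (hval e he).1, stratCost_eq b c fun e he => (hs e he).1,
      totalRate_map_fst, rateBy_eq_pairRate, pairRate_comm, add_sub_add_right_eq_sub,
      ← mul_sub, ← sum_sub_distrib, sum_eq_single_of_mem u (mem_erase.mpr ⟨huv, mem_univ u⟩)
        fun y _ hyu => by rw [hseat y hyu, sub_self], hseat_u, sub_zero]
  have := hst.stratCost_sub_le ha hs hN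
  simp only [card_empty, Nat.cast_zero, mul_zero] at this
  nlinarith [mul_pos hc hpos]

lemma Stable.rateBy_lt (hst : Stable a b c cfg) (ha : 0 < a) (hb : 0 < b) (hc : 0 < c)
    (v u : V) : rateBy cfg v v u < a / c := by
  by_contra! hge
  have hval := hst.1 v
  set Ld := (cfg v).filter (u ∈ ·.1)
  set Lk := (cfg v).filter fun e => ¬u ∈ e.1
  have hLd : ValidStrategy v Ld := fun e he => hval e (List.mem_of_mem_filter he)
  have hLk : ValidStrategy v Lk := fun e he => hval e (List.mem_of_mem_filter he)
  have hsplit : ∀ y, pairRate Ld y v + pairRate Lk y v = pairRate (cfg v) y v := fun y =>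
    pairRate_filter_add_filter_not _ _ _ _
  have hrate : rateBy cfg v v u = totalRate Ld := by
    rw [rateBy_eq_pairRate, pairRate_comm, ← hsplit,
      pairRate_eq_zero (s := Lk) fun e he h => by simp [Lk, h.1] at he, add_zero]
    exact pairRate_eq_totalRate _ _ _ fun e he =>
      ⟨by simpa using List.of_mem_filter he, (hLd e he).1⟩
  have hM : a ≤ c * totalRate Ld := by
    rw [← hrate, mul_comm]
    exact (div_le_iff₀ hc).mp hge
  obtain ⟨s, hs, hkeep, hsaving⟩ :=
    hLd.exists_drop_full_guests hb hc.le ((div_pos ha hc).trans_le (hrate ▸ hge))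
  set D := (univ.erase v).filter fun y => pairRate Ld y v = totalRate Ld
  -- the deviation keeps the events without `u` and compresses those with `u`
  have hs' : ValidStrategy v (Lk ++ s) := fun e he =>
    (List.mem_append.mp he).elim (hLk e) (hs e)
  have hN : nbrs cfg v \ D ⊆ nbrs (Function.update cfg v (Lk ++ s)) v :=
    nbrs_sdiff_subset_nbrs_update _ _ _ _ fun y hy => by
      obtain ⟨hyN, hyD⟩ := mem_sdiff.mp hy
      have hyv : y ≠ v := by simp only [nbrs, mem_filter] at hyN; exact hyN.2.1
      have hlt : pairRate Ld y v < totalRate Ld :=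
        (pairRate_le_totalRate hLd).lt_of_ne fun h => hyD (by simp [D, hyv, h])
      rw [← hsplit, pairRate_append]
      linarith [hkeep y hyv hlt]
  have hcost : stratCost b c v (cfg v) - stratCost b c v (Lk ++ s) =
      stratCost b c v Ld - stratCost b c v s := by
    rw [← stratCost_filter_add_filter_not (s := cfg v) b c (u ∈ ·.1), stratCost_append]
    ring
  have := hst.stratCost_sub_le ha.le hs' hN
  nlinarith [mul_le_mul_of_nonneg_right hM (Nat.cast_nonneg (α := ℝ) #D)]

end Deviation

/-- In any stable configuration, every invitation rate is strictly below
`γ = a/c`, and an agent only invites (at positive rate) those with whom she ends up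
connected. -/
theorem stable_invitation_rates {V : Type*} [Fintype V] [DecidableEq V]
    (a b c : ℝ) (ha : 0 < a) (hb : 0 < b) (hc : 0 < c)
    (cfg : Config V) (hst : Stable a b c cfg) :
    ∀ v u : V, u ≠ v →
      rateBy cfg v v u < a / c ∧ (0 < rateBy cfg v v u → u ∈ nbrs cfg v) :=
  fun v u huv => ⟨hst.rateBy_lt ha hb hc v u, hst.mem_nbrs_of_rateBy_pos ha.le hc huv⟩
end

section
/- Let H be a strong subgraph on ℓ vertices of the network supported by a stable configuration (i.e., H is a subgraph and for all u,v ∈ H, all common neighbors of u and v lie in H). If γ ≤ 1/ℓ, then H contains no edges. In particular, K_ℓ can be a strong subgraph of a supportable network only if γ > 1/ℓ. -/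
/-!
A host `w` of an event attended by `u` and `v` could stop inviting `u`; stability makes `u` a
neighbour of `w` and bounds `w`'s rate towards `u`, hence its contribution to the meeting rate of
`u` and `v`, by `γ = a / c`. For an edge `uv` inside a strong subgraph `H` the contributing hosts
are therefore common neighbours or endpoints, all in `H`, and as `#H · γ ≤ 1` each contributes
exactly `γ`. So `u` spends rate at least `γ` on each of its neighbours, at cost `cγ = a`, the
whole benefit of that neighbour, and pays `b` times its positive total rate on top: its utility
is negative, while hosting nothing would give it a nonnegative one.
-/

open Finset

theorem List.sum_map_finset_sum {ι α M : Type*} [AddCommMonoid M] (l : List ι) (s : Finset α)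
    (f : ι → α → M) :
    (l.map fun i => ∑ a ∈ s, f i a).sum = ∑ a ∈ s, (l.map fun i => f i a).sum := by
  simpa using Multiset.sum_map_sum (m := (l : Multiset ι)) (s := s) (f := f)

section Game

variable {V : Type*} [DecidableEq V]

def uninvite (x : V) (s : List (Finset V × ℝ)) : List (Finset V × ℝ) :=
  s.map fun e => (e.1.erase x, e.2)

lemma ValidStrategy.uninvite {w x : V} {s : List (Finset V × ℝ)} (hs : ValidStrategy w s)
    (hxw : x ≠ w) : ValidStrategy w (uninvite x s) := by
  simp only [_root_.uninvite, ValidStrategy, List.mem_map]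
  rintro _ ⟨e, he, rfl⟩
  exact ⟨Finset.mem_erase.2 ⟨hxw.symm, (hs e he).1⟩, (hs e he).2⟩

lemma rateBy_nonneg {cfg : Config V} (hv : ConfigValid cfg) (w u v : V) :
    0 ≤ rateBy cfg w u v :=
  List.sum_nonneg fun _ ht => by
    obtain ⟨e, he, rfl⟩ := List.mem_map.1 ht
    split_ifs
    exacts [(hv w e he).2.le, le_rfl]

lemma rateBy_comm (cfg : Config V) (w u v : V) : rateBy cfg w u v = rateBy cfg w v u := by
  simp only [rateBy, and_comm]

lemma rateBy_le_rateBy_host {cfg : Config V} (hv : ConfigValid cfg) (w u v : V) :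
    rateBy cfg w u v ≤ rateBy cfg w w u :=
  List.sum_le_sum fun e he => by
    obtain ⟨hw, hpos⟩ := hv w e he
    split_ifs with huv hwu
    · exact le_rfl
    · exact absurd ⟨hw, huv.1⟩ hwu
    · exact hpos.le
    · exact le_rfl

lemma stratCost_uninvite (b c : ℝ) {cfg : Config V} (hv : ConfigValid cfg) {w x : V}
    (hxw : x ≠ w) :
    stratCost b c w (uninvite x (cfg w)) + c * rateBy cfg w w x = stratCost b c w (cfg w) := by
  rw [stratCost, stratCost, rateBy, uninvite, List.map_map, ← List.sum_map_mul_left,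
    ← List.sum_map_add]
  refine congrArg List.sum (List.map_congr_left fun e he => ?_)
  have hw : w ∈ e.1 := (hv w e he).1
  simp only [Function.comp_apply, Finset.erase_right_comm]
  by_cases hx : x ∈ e.1
  · rw [Finset.cast_card_erase_of_mem (Finset.mem_erase.2 ⟨hxw, hx⟩), if_pos ⟨hw, hx⟩]
    ring
  · rw [Finset.erase_eq_of_notMem fun h => hx (Finset.mem_of_mem_erase h),
      if_neg fun h => hx h.2]
    ring

lemma rateBy_update_uninvite {cfg : Config V} {w x p q : V} (hp : p ≠ x) (hq : q ≠ x) (h : V) :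
    rateBy (Function.update cfg w (uninvite x (cfg w))) h p q = rateBy cfg h p q := by
  rcases eq_or_ne h w with rfl | hh
  · simp [rateBy, uninvite, Function.comp_def, hp, hq]
  · rw [rateBy, Function.update_of_ne hh, rateBy]

lemma add_le_stratCost (b : ℝ) {c : ℝ} (hc : 0 ≤ c) {cfg : Config V} {w : V}
    (hv : ValidStrategy w (cfg w)) {L : Finset V} (hL : w ∉ L) :
    c * ∑ x ∈ L, rateBy cfg w w x + b * rateBy cfg w w w ≤ stratCost b c w (cfg w) := by
  rw [rateBy, stratCost, Finset.sum_congr rfl fun x _ => rateBy.eq_1 cfg w w x,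
    ← List.sum_map_finset_sum, ← List.sum_map_mul_left, ← List.sum_map_mul_left,
    ← List.sum_map_add]
  refine List.sum_le_sum fun e he => ?_
  obtain ⟨hw, hpos⟩ := hv e he
  have hguests : #(L ∩ e.1) ≤ #(e.1.erase w) :=
    Finset.card_le_card fun x hx => Finset.mem_erase.2
      ⟨fun h => hL (h ▸ (Finset.mem_inter.1 hx).1), (Finset.mem_inter.1 hx).2⟩
  simp only [hw, true_and, and_self, if_true, Finset.sum_ite_mem, Finset.sum_const,
    nsmul_eq_mul]
  have : (#(L ∩ e.1) : ℝ) ≤ #(e.1.erase w) := by exact_mod_cast hguests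
  nlinarith [mul_le_mul_of_nonneg_left this (mul_nonneg hc hpos.le)]

variable [Fintype V]

lemma mem_nbrs {cfg : Config V} {u v : V} : u ∈ nbrs cfg v ↔ connected cfg u v := by
  simp [nbrs]

lemma erase_nbrs_subset_nbrs_update_uninvite {cfg : Config V} {w x : V} (hxw : x ≠ w) :
    (nbrs cfg w).erase x ⊆ nbrs (Function.update cfg w (uninvite x (cfg w))) w := by
  intro y hy
  obtain ⟨hyx, hy⟩ := Finset.mem_erase.1 hy
  rw [mem_nbrs] at hy ⊢
  simpa only [connected, meet, rateBy_update_uninvite hyx hxw.symm] using hy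

/-- Compare with the deviation in which `w` stops inviting `x`: it saves `c` per unit of rate
and can only lose the connection to `x`. -/
lemma Stable.mul_rateBy_host_le_mul_card_sub {a b c : ℝ} (ha : 0 ≤ a) {cfg : Config V}
    (hst : Stable a b c cfg) {w x : V} (hxw : x ≠ w) :
    c * rateBy cfg w w x ≤ a * (#(nbrs cfg w) - #((nbrs cfg w).erase x)) := by
  have hstab := hst.2 w _ ((hst.1 w).uninvite hxw)
  have hcard : #((nbrs cfg w).erase x) ≤ #(nbrs (Function.update cfg w (uninvite x (cfg w))) w) :=
    Finset.card_le_card (erase_nbrs_subset_nbrs_update_uninvite hxw)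
  have hcost := stratCost_uninvite b c hst.1 hxw
  simp only [utility, Function.update_self] at hstab
  nlinarith [(Nat.cast_le (α := ℝ)).2 hcard]

lemma Stable.mul_rateBy_host_le {a b c : ℝ} (ha : 0 ≤ a) {cfg : Config V}
    (hst : Stable a b c cfg) {w x : V} (hxw : x ≠ w) : c * rateBy cfg w w x ≤ a := by
  have h := hst.mul_rateBy_host_le_mul_card_sub ha hxw
  have hcard : #(nbrs cfg w) ≤ #((nbrs cfg w).erase x) + 1 := by
    have := Finset.pred_card_le_card_erase (s := nbrs cfg w) (a := x)
    omega
  have hcard' : (#(nbrs cfg w) : ℝ) ≤ #((nbrs cfg w).erase x) + 1 := by exact_mod_cast hcard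
  nlinarith

lemma Stable.rateBy_host_eq_zero {a b c : ℝ} (ha : 0 ≤ a) (hc : 0 < c) {cfg : Config V}
    (hst : Stable a b c cfg) {w x : V} (hxw : x ≠ w) (hx : ¬connected cfg x w) :
    rateBy cfg w w x = 0 := by
  have h := hst.mul_rateBy_host_le_mul_card_sub ha hxw
  rw [Finset.erase_eq_of_notMem (mt mem_nbrs.1 hx), sub_self, mul_zero] at h
  exact le_antisymm (nonpos_of_mul_nonpos_right h hc) (rateBy_nonneg hst.1 w w x)

lemma Stable.connected_of_rateBy_pos {a b c : ℝ} (ha : 0 ≤ a) (hc : 0 < c) {cfg : Config V}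
    (hst : Stable a b c cfg) {w x y : V} (hxw : x ≠ w) (hpos : 0 < rateBy cfg w x y) :
    connected cfg x w := by
  by_contra hx
  have := rateBy_le_rateBy_host hst.1 w x y
  rw [hst.rateBy_host_eq_zero ha hc hxw hx] at this
  linarith

lemma Stable.rateBy_le_div {a b c : ℝ} (ha : 0 ≤ a) (hc : 0 < c) {cfg : Config V}
    (hst : Stable a b c cfg) (w : V) {u v : V} (huv : u ≠ v) : rateBy cfg w u v ≤ a / c := by
  rw [le_div_iff₀' hc]
  rcases eq_or_ne w u with rfl | hwu
  · exact hst.mul_rateBy_host_le ha huv.symm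
  · exact (mul_le_mul_of_nonneg_left (rateBy_le_rateBy_host hst.1 w u v) hc.le).trans
      (hst.mul_rateBy_host_le ha hwu.symm)

lemma Stable.utility_nonneg {a b c : ℝ} (ha : 0 ≤ a) {cfg : Config V} (hst : Stable a b c cfg)
    (v : V) : 0 ≤ utility a b c cfg v := by
  refine le_trans ?_ (hst.2 v [] fun _ he => absurd he List.not_mem_nil)
  simp only [utility, stratCost, Function.update_self, List.map_nil, List.sum_nil, sub_zero]
  positivity

variable {a b c : ℝ} {cfg : Config V} {G : SimpleGraph V} {H : Finset V}

lemma Stable.meet_eq_sum_rateBy_of_strong (ha : 0 ≤ a) (hc : 0 < c) (hst : Stable a b c cfg)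
    (hsupp : Supports cfg G) (hstrong : ∀ u ∈ H, ∀ v ∈ H, ∀ w : V, G.Adj u w → G.Adj v w → w ∈ H)
    {u v : V} (hu : u ∈ H) (hv : v ∈ H) : meet cfg u v = ∑ w ∈ H, rateBy cfg w u v := by
  refine (Finset.sum_subset (Finset.subset_univ H) fun w _ hwH => ?_).symm
  by_contra hne
  have hpos : 0 < rateBy cfg w u v := (rateBy_nonneg hst.1 w u v).lt_of_ne' hne
  have huw : connected cfg u w :=
    hst.connected_of_rateBy_pos ha hc (fun h => hwH (h ▸ hu)) hpos
  have hvw : connected cfg v w :=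
    hst.connected_of_rateBy_pos ha hc (fun h => hwH (h ▸ hv)) (rateBy_comm cfg w u v ▸ hpos)
  exact hwH (hstrong u hu v hv w ((hsupp u w).2 huw) ((hsupp v w).2 hvw))

/-- The meeting rate `≥ 1` of an edge inside `H` is a sum of `#H` contributions, each at most
`a / c ≤ 1 / #H`, so none of them is smaller than `a / c`. -/
lemma Stable.div_le_rateBy_host_of_strong (ha : 0 ≤ a) (hc : 0 < c) (hst : Stable a b c cfg)
    (hsupp : Supports cfg G) (hstrong : ∀ u ∈ H, ∀ v ∈ H, ∀ w : V, G.Adj u w → G.Adj v w → w ∈ H)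
    (hγ : a / c ≤ 1 / (#H : ℝ)) {u v : V} (hu : u ∈ H) (huv : G.Adj u v) :
    a / c ≤ rateBy cfg u u v := by
  obtain ⟨hne, hmeet⟩ := (hsupp u v).1 huv
  have hv : v ∈ H := hstrong u hu u hu v huv huv
  by_contra! hlt
  have hsum : ∑ w ∈ H, rateBy cfg w u v < ∑ _w ∈ H, a / c :=
    Finset.sum_lt_sum (fun w _ => hst.rateBy_le_div ha hc w hne) ⟨u, hu, hlt⟩
  have hH : (0 : ℝ) < #H := by exact_mod_cast Finset.card_pos.2 ⟨u, hu⟩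
  rw [Finset.sum_const, nsmul_eq_mul, ← hst.meet_eq_sum_rateBy_of_strong ha hc hsupp hstrong hu hv]
    at hsum
  have : (#H : ℝ) * (a / c) ≤ 1 := by
    calc (#H : ℝ) * (a / c) ≤ #H * (1 / #H) := by gcongr
      _ = 1 := by field_simp
  linarith

end Game

theorem strong_subgraph_no_edges_general {V : Type*} [Fintype V] [DecidableEq V]
    (a b c : ℝ) (ha : 0 < a) (hb : 0 < b) (hc : 0 < c)
    (cfg : Config V) (hst : Stable a b c cfg)
    (G : SimpleGraph V) (hsupp : Supports cfg G)
    (H : Finset V) (ℓ : ℕ) (hcard : H.card = ℓ)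
    (hstrong : ∀ u ∈ H, ∀ v ∈ H, ∀ w : V, G.Adj u w → G.Adj v w → w ∈ H)
    (hγ : a / c ≤ 1 / (ℓ : ℝ)) :
    ∀ u ∈ H, ∀ v ∈ H, ¬ G.Adj u v := by
  subst hcard
  intro u hu v _ huv
  have hown : ∀ x, G.Adj u x → a / c ≤ rateBy cfg u u x := fun x hx =>
    hst.div_le_rateBy_host_of_strong ha.le hc hsupp hstrong hγ hu hx
  have hbudget : 0 < rateBy cfg u u u :=
    (div_pos ha hc).trans_le ((hown v huv).trans (rateBy_le_rateBy_host hst.1 u u v))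
  have hcost : a * #(nbrs cfg u) + b * rateBy cfg u u u ≤ stratCost b c u (cfg u) :=
    calc a * #(nbrs cfg u) + b * rateBy cfg u u u
        = c * ∑ _x ∈ nbrs cfg u, a / c + b * rateBy cfg u u u := by
          rw [Finset.sum_const, nsmul_eq_mul]
          field_simp
      _ ≤ c * ∑ x ∈ nbrs cfg u, rateBy cfg u u x + b * rateBy cfg u u u := by
          gcongr with x hx
          exact hown x ((hsupp x u).2 (mem_nbrs.1 hx)).symm
      _ ≤ stratCost b c u (cfg u) :=
          add_le_stratCost b hc.le (hst.1 u) fun h => (mem_nbrs.1 h).1 rfl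
  have hrational := hst.utility_nonneg ha.le u
  rw [utility] at hrational
  linarith [mul_pos hb hbudget]

/-- If `H` is a strong subgraph on `ℓ` vertices of the network supported
by a stable configuration (all common neighbours of vertices of `H` lie in `H`) and
`γ = a/c ≤ 1/ℓ`, then `H` contains no edges; in particular `K_ℓ` can be a strong subgraph
of a supportable network only if `γ > 1/ℓ`. -/
theorem strong_subgraph_no_edges {V : Type*} [Fintype V] [DecidableEq V]
    (a b c : ℝ) (ha : 0 < a) (hb : 0 < b) (hc : 0 < c)
    (cfg : Config V) (hst : Stable a b c cfg)
    (G : SimpleGraph V) [DecidableRel G.Adj] (hsupp : Supports cfg G)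
    (H : Finset V) (ℓ : ℕ) (hℓ : 0 < ℓ) (hcard : H.card = ℓ)
    (hstrong : ∀ u ∈ H, ∀ v ∈ H, ∀ w : V, G.Adj u w → G.Adj v w → w ∈ H)
    (hγ : a / c ≤ 1 / (ℓ : ℝ)) :
    ∀ u ∈ H, ∀ v ∈ H, ¬ G.Adj u v :=
  strong_subgraph_no_edges_general a b c ha hb hc cfg hst G hsupp H ℓ hcard hstrong hγ
end
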